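/- Let n ≥ 1, n1 ≥ 2, m ≥ 1, r ≥ 0, let d0 ∈ U(n; 3^m), d1 ∈ U(n1; 3^m) (i.e., m1 = 0, m2 = m), let d2 be a column-balanced n1×r matrix with entries in {1,2}, let D3 be the corresponding column augmented design, and let D3b be D3 with the appended blocking column. Then WD(D3b) ≥ C(r+1) + (n²/(n+n1)²)·(3/2)^{r+1}·WD(d0) + (1/(n+n1)²)·(23/18)^{m+r}·( (3/2)·( p2·(27/23)^{w2} + q2·(27/23)^{w2+1} ) + 2·(5/4)·( p3·(27/23)^{w3} + q3·(27/23)^{w3+1} ) ). -/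

import Mathlib

open Finset

noncomputable section

namespace CAUD

/-- The mapped point value `u = (2x+1)/(2q)`. -/
def uVal (q x : ℕ) : ℝ := (2 * (x : ℝ) + 1) / (2 * (q : ℝ))

/-- The squared wrap-around L2-discrepancy of an `N × M` design whose `k`-th
column takes values in `{0, …, q k - 1}`. -/
def WD {N M : ℕ} (q : Fin M → ℕ) (x : Fin N → Fin M → ℕ) : ℝ :=
  -((4 : ℝ) / 3) ^ M + (1 / (N : ℝ) ^ 2) *
    ∑ i : Fin N, ∑ j : Fin N, ∏ k : Fin M,
      ((3 : ℝ) / 2 - |uVal (q k) (x i k) - uVal (q k) (x j k)| *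
        (1 - |uVal (q k) (x i k) - uVal (q k) (x j k)|))

/-- A mixed-level U-type design in `U(N; 2^{m1} 3^{m2})`: the first `m1` columns are
two-level and balanced, the last `m2` columns are three-level and balanced. -/
def IsUType (N m1 m2 : ℕ) (d : Fin N → Fin (m1 + m2) → ℕ) : Prop :=
  ∀ k : Fin (m1 + m2),
    if (k : ℕ) < m1 then
      (∀ i, d i k < 2) ∧ ∀ v < 2, 2 * (univ.filter (fun i => d i k = v)).card = N
    else
      (∀ i, d i k < 3) ∧ ∀ v < 3, 3 * (univ.filter (fun i => d i k = v)).card = N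

/-- A column-balanced `n1 × r` matrix with entries in `{1, 2}`: every column has
exactly `n1/2` entries equal to 1 and `n1/2` entries equal to 2. -/
def IsBalanced (n1 r : ℕ) (d2 : Fin n1 → Fin r → ℕ) : Prop :=
  (∀ i k, d2 i k = 1 ∨ d2 i k = 2) ∧
  ∀ k, 2 * (univ.filter (fun i => d2 i k = 1)).card = n1 ∧
       2 * (univ.filter (fun i => d2 i k = 2)).card = n1

/-- The column augmented design: first `n` rows are `(d0, 0)`, last `n1` rows `(d1, d2)`. -/
def augDesign (n n1 m r : ℕ) (d0 : Fin n → Fin m → ℕ) (d1 : Fin n1 → Fin m → ℕ)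
    (d2 : Fin n1 → Fin r → ℕ) : Fin (n + n1) → Fin (m + r) → ℕ := fun i k =>
  if hi : (i : ℕ) < n then
    if hk : (k : ℕ) < m then d0 ⟨i, hi⟩ ⟨k, hk⟩ else 0
  else
    if hk : (k : ℕ) < m then d1 ⟨(i : ℕ) - n, by have := i.isLt; omega⟩ ⟨k, hk⟩
    else d2 ⟨(i : ℕ) - n, by have := i.isLt; omega⟩ ⟨(k : ℕ) - m, by have := k.isLt; omega⟩

/-- Append one blocking column: 0 on the initial rows, 1 on the follow-up rows. -/
def appendOne (n n1 M : ℕ) (D : Fin (n + n1) → Fin M → ℕ) :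
    Fin (n + n1) → Fin (M + 1) → ℕ := fun i k =>
  if hk : (k : ℕ) < M then D i ⟨k, hk⟩ else if (i : ℕ) < n then 0 else 1

/-- Append two blocking columns: the first is 0 on the initial rows and 1 on the
follow-up rows; the second is 0 on the initial rows and the first `n1/2` follow-up
rows, and 1 on the remaining follow-up rows. -/
def appendTwo (n n1 M : ℕ) (D : Fin (n + n1) → Fin M → ℕ) :
    Fin (n + n1) → Fin (M + 2) → ℕ := fun i k =>
  if hk : (k : ℕ) < M then D i ⟨k, hk⟩
  else if (k : ℕ) = M then (if (i : ℕ) < n then 0 else 1)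
  else (if (i : ℕ) < n + n1 / 2 then 0 else 1)

/-- Level sizes of the (possibly blocking-augmented) column augmented design:
first `m1` columns are two-level, the next `m2 + r` are three-level, anything
after that (blocking columns) is two-level. -/
def qfun (m1 m2 r k : ℕ) : ℕ :=
  if k < m1 then 2 else if k < m1 + m2 + r then 3 else 2

/-- Coincidence number among the first `m1` columns. -/
def Fco {N M : ℕ} (m1 : ℕ) (D : Fin N → Fin M → ℕ) (i j : Fin N) : ℕ :=
  (univ.filter (fun k : Fin M => (k : ℕ) < m1 ∧ D i k = D j k)).card

/-- Coincidence number among columns `m1, …, m1 + m2 - 1`. -/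
def Vco {N M : ℕ} (m1 m2 : ℕ) (D : Fin N → Fin M → ℕ) (i j : Fin N) : ℕ :=
  (univ.filter (fun k : Fin M => m1 ≤ (k : ℕ) ∧ (k : ℕ) < m1 + m2 ∧ D i k = D j k)).card

/-- Coincidence number among the columns `≥ m`, counting agreements with common
value in `{1, 2}`. -/
def Tco {N M : ℕ} (m : ℕ) (D : Fin N → Fin M → ℕ) (i j : Fin N) : ℕ :=
  (univ.filter (fun k : Fin M =>
    m ≤ (k : ℕ) ∧ D i k = D j k ∧ (D i k = 1 ∨ D i k = 2))).card

/-- Total coincidence number between two rows. -/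
def lam {N M : ℕ} (D : Fin N → Fin M → ℕ) (i j : Fin N) : ℕ :=
  (univ.filter (fun k : Fin M => D i k = D j k)).card

/-- Number of rows whose `k`-th entry is `u` and whose `l`-th entry is `v`. -/
def nuv {N M : ℕ} (d : Fin N → Fin M → ℕ) (k l : Fin M) (u v : ℕ) : ℕ :=
  (univ.filter (fun i : Fin N => d i k = u ∧ d i l = v)).card

/-- Non-orthogonality of a pair of columns. -/
def fNOD {N M : ℕ} (q : Fin M → ℕ) (d : Fin N → Fin M → ℕ) (k l : Fin M) : ℝ :=
  ∑ u ∈ Finset.range (q k), ∑ v ∈ Finset.range (q l),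
    ((nuv d k l u v : ℝ) - (N : ℝ) / ((q k : ℝ) * (q l : ℝ))) ^ 2

/-- The `E(f_NOD)` criterion: average non-orthogonality over all pairs of columns. -/
def EfNOD {N M : ℕ} (q : Fin M → ℕ) (d : Fin N → Fin M → ℕ) : ℝ :=
  (∑ k : Fin M, ∑ l : Fin M, if (k : ℕ) < (l : ℕ) then fNOD q d k l else 0) /
    (Nat.choose M 2 : ℝ)

/-- Stacking the stage designs `d 0, …, d (l-1)` on top of one another. -/
def stack (M : ℕ) (ns : ℕ → ℕ) (d : (j : ℕ) → Fin (ns j) → Fin M → ℕ) :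
    (l : ℕ) → Fin (∑ j ∈ Finset.range l, ns j) → Fin M → ℕ
  | 0 => fun _ _ => 0
  | l + 1 => fun i =>
    let i' : Fin ((∑ j ∈ Finset.range l, ns j) + ns l) :=
      Fin.cast (Finset.sum_range_succ ns l) i
    if h : (i' : ℕ) < ∑ j ∈ Finset.range l, ns j then
      stack M ns d l ⟨(i' : ℕ), h⟩
    else d l ⟨(i' : ℕ) - ∑ j ∈ Finset.range l, ns j, by have := i'.isLt; omega⟩

def aa : ℝ := Real.log (6 / 5)

def bb : ℝ := Real.log (27 / 23)

/-- The constant `C(s)`. -/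
def Cconst (n n1 m s : ℕ) : ℝ :=
  -(((4 : ℝ) / 3) ^ s - ((n : ℝ) ^ 2 / ((n : ℝ) + n1) ^ 2) * ((3 : ℝ) / 2) ^ s) * ((4 : ℝ) / 3) ^ m
  + ((n1 : ℝ) / ((n : ℝ) + n1) ^ 2) * ((3 : ℝ) / 2) ^ (m + s)

def phi1 (n1 m1 m2 r : ℕ) : ℝ :=
  aa * m1 * ((n1 : ℝ) - 2) / (2 * ((n1 : ℝ) - 1)) + bb * m2 * ((n1 : ℝ) - 3) / (3 * ((n1 : ℝ) - 1))
  + bb * r * ((n1 : ℝ) - 2) / (2 * ((n1 : ℝ) - 1))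

def phi2 (m1 m2 : ℕ) : ℝ := aa * m1 / 2 + bb * m2 / 3

def T1c (n1 m1 m2 r : ℕ) : ℝ := (n1 : ℝ) * ((n1 : ℝ) - 1) * Real.exp (phi1 n1 m1 m2 r)

def T2c (n n1 m1 m2 : ℕ) : ℝ := (n : ℝ) * (n1 : ℝ) * Real.exp (phi2 m1 m2)

/-- Lower bound `LBW3` (mixed-level case, Theorem 1). -/
def LBW3 (n n1 m1 m2 r : ℕ) (wd0 : ℝ) : ℝ :=
  Cconst n n1 (m1 + m2) r + ((n : ℝ) ^ 2 / ((n : ℝ) + n1) ^ 2) * ((3 : ℝ) / 2) ^ r * wd0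
  + (1 / ((n : ℝ) + n1) ^ 2) * ((5 : ℝ) / 4) ^ m1 * ((23 : ℝ) / 18) ^ (m2 + r) *
      (T1c n1 m1 m2 r + 2 * T2c n n1 m1 m2)

def phi1p (n1 m r : ℕ) : ℝ :=
  aa * m * ((n1 : ℝ) - 2) / (2 * ((n1 : ℝ) - 1)) + bb * r * ((n1 : ℝ) - 2) / (2 * ((n1 : ℝ) - 1))

def T1pc (n1 m r : ℕ) : ℝ := (n1 : ℝ) * ((n1 : ℝ) - 1) * Real.exp (phi1p n1 m r)

def w1 (m : ℕ) : ℕ := m / 2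

def q1c (n n1 m : ℕ) : ℝ := (m : ℝ) * n * n1 / 2 - (n : ℝ) * n1 * (w1 m : ℝ)

def p1c (n n1 m : ℕ) : ℝ := (n : ℝ) * n1 - q1c n n1 m

/-- Lower bound `LBW3` for a two-level initial design (Theorem 2). -/
def LBW32 (n n1 m r : ℕ) (wd0 : ℝ) : ℝ :=
  Cconst n n1 m r + ((n : ℝ) ^ 2 / ((n : ℝ) + n1) ^ 2) * ((3 : ℝ) / 2) ^ r * wd0
  + (1 / ((n : ℝ) + n1) ^ 2) * ((5 : ℝ) / 4) ^ m * ((23 : ℝ) / 18) ^ r *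
      (T1pc n1 m r + 2 * (p1c n n1 m * ((6 : ℝ) / 5) ^ w1 m + q1c n n1 m * ((6 : ℝ) / 5) ^ (w1 m + 1)))

def w2 (n1 m r : ℕ) : ℤ :=
  ⌊(m : ℝ) * ((n1 : ℝ) - 3) / (3 * ((n1 : ℝ) - 1)) + (r : ℝ) * ((n1 : ℝ) - 2) / (2 * ((n1 : ℝ) - 1))⌋

def q2c (n1 m r : ℕ) : ℝ :=
  (m : ℝ) * n1 * ((n1 : ℝ) - 3) / 3 + (r : ℝ) * n1 * ((n1 : ℝ) - 2) / 2
  - (n1 : ℝ) * ((n1 : ℝ) - 1) * (w2 n1 m r : ℝ)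

def p2c (n1 m r : ℕ) : ℝ := (n1 : ℝ) * ((n1 : ℝ) - 1) - q2c n1 m r

def w3 (m : ℕ) : ℕ := m / 3

def q3c (n n1 m : ℕ) : ℝ := (m : ℝ) * n * n1 / 3 - (n : ℝ) * n1 * (w3 m : ℝ)

def p3c (n n1 m : ℕ) : ℝ := (n : ℝ) * n1 - q3c n n1 m

/-- Lower bound `LBW3` for a three-level initial design (Theorem 3). -/
def LBW33 (n n1 m r : ℕ) (wd0 : ℝ) : ℝ :=
  Cconst n n1 m r + ((n : ℝ) ^ 2 / ((n : ℝ) + n1) ^ 2) * ((3 : ℝ) / 2) ^ r * wd0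
  + (1 / ((n : ℝ) + n1) ^ 2) * ((23 : ℝ) / 18) ^ (m + r) *
      (p2c n1 m r * ((27 : ℝ) / 23) ^ w2 n1 m r + q2c n1 m r * ((27 : ℝ) / 23) ^ (w2 n1 m r + 1)
       + 2 * (p3c n n1 m * ((27 : ℝ) / 23) ^ w3 m + q3c n n1 m * ((27 : ℝ) / 23) ^ (w3 m + 1)))

/-- Lower bound of Theorem 4 for a mixed-level initial design. -/
def LBW3b1 (n n1 m1 m2 r : ℕ) (wd0 : ℝ) : ℝ :=
  Cconst n n1 (m1 + m2) (r + 1) + ((n : ℝ) ^ 2 / ((n : ℝ) + n1) ^ 2) * ((3 : ℝ) / 2) ^ (r + 1) * wd0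
  + (1 / ((n : ℝ) + n1) ^ 2) * ((5 : ℝ) / 4) ^ m1 * ((23 : ℝ) / 18) ^ (m2 + r) *
      ((3 : ℝ) / 2 * T1c n1 m1 m2 r + 2 * ((5 : ℝ) / 4) * T2c n n1 m1 m2)

/-- Lower bound of Theorem 4 for a two-level initial design. -/
def LBW3b2 (n n1 m r : ℕ) (wd0 : ℝ) : ℝ :=
  Cconst n n1 m (r + 1) + ((n : ℝ) ^ 2 / ((n : ℝ) + n1) ^ 2) * ((3 : ℝ) / 2) ^ (r + 1) * wd0
  + (1 / ((n : ℝ) + n1) ^ 2) * ((5 : ℝ) / 4) ^ m * ((23 : ℝ) / 18) ^ r *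
      ((3 : ℝ) / 2 * T1pc n1 m r +
        2 * ((5 : ℝ) / 4) * (p1c n n1 m * ((6 : ℝ) / 5) ^ w1 m + q1c n n1 m * ((6 : ℝ) / 5) ^ (w1 m + 1)))

/-- Lower bound of Theorem 4 for a three-level initial design. -/
def LBW3b3 (n n1 m r : ℕ) (wd0 : ℝ) : ℝ :=
  Cconst n n1 m (r + 1) + ((n : ℝ) ^ 2 / ((n : ℝ) + n1) ^ 2) * ((3 : ℝ) / 2) ^ (r + 1) * wd0
  + (1 / ((n : ℝ) + n1) ^ 2) * ((23 : ℝ) / 18) ^ (m + r) *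
      ((3 : ℝ) / 2 * (p2c n1 m r * ((27 : ℝ) / 23) ^ w2 n1 m r
                      + q2c n1 m r * ((27 : ℝ) / 23) ^ (w2 n1 m r + 1))
       + 2 * ((5 : ℝ) / 4) * (p3c n n1 m * ((27 : ℝ) / 23) ^ w3 m
                              + q3c n n1 m * ((27 : ℝ) / 23) ^ (w3 m + 1)))

def phi1B (n1 m1 m2 r : ℕ) : ℝ :=
  aa * ((m1 : ℝ) + 1) * ((n1 : ℝ) - 2) / (2 * ((n1 : ℝ) - 1))
  + bb * m2 * ((n1 : ℝ) - 3) / (3 * ((n1 : ℝ) - 1))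
  + bb * r * ((n1 : ℝ) - 2) / (2 * ((n1 : ℝ) - 1))

def phi2B (m1 m2 : ℕ) : ℝ := aa * ((m1 : ℝ) + 1) / 2 + bb * m2 / 3

def T1Bc (n1 m1 m2 r : ℕ) : ℝ := (n1 : ℝ) * ((n1 : ℝ) - 1) * Real.exp (phi1B n1 m1 m2 r)

def T2Bc (n n1 m1 m2 : ℕ) : ℝ := (n : ℝ) * (n1 : ℝ) * Real.exp (phi2B m1 m2)

/-- Lower bound `LBW3B` (Theorem 5). -/
def LBW3B (n n1 m1 m2 r : ℕ) (wd0 : ℝ) : ℝ :=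
  Cconst n n1 (m1 + m2) (r + 2) + ((n : ℝ) ^ 2 / ((n : ℝ) + n1) ^ 2) * ((3 : ℝ) / 2) ^ (r + 2) * wd0
  + (1 / ((n : ℝ) + n1) ^ 2) * ((5 : ℝ) / 4) ^ (m1 + 1) * ((23 : ℝ) / 18) ^ (m2 + r) *
      ((3 : ℝ) / 2 * T1Bc n1 m1 m2 r + 2 * ((5 : ℝ) / 4) * T2Bc n n1 m1 m2)

def psi1 (n1 m1 m2 r : ℕ) : ℤ :=
  ⌊((m1 : ℝ) * ((n1 : ℝ) - 2) / 2 + (m2 : ℝ) * ((n1 : ℝ) - 3) / 3 + (r : ℝ) * ((n1 : ℝ) - 2) / 2) /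
      ((n1 : ℝ) - 1)⌋

def eta1 (n1 m1 m2 r : ℕ) : ℝ :=
  (m1 : ℝ) * n1 * ((n1 : ℝ) - 2) / 2 + (m2 : ℝ) * n1 * ((n1 : ℝ) - 3) / 3
  + (r : ℝ) * n1 * ((n1 : ℝ) - 2) / 2 - (n1 : ℝ) * ((n1 : ℝ) - 1) * (psi1 n1 m1 m2 r : ℝ)

def zeta1 (n1 m1 m2 r : ℕ) : ℝ := (n1 : ℝ) * ((n1 : ℝ) - 1) - eta1 n1 m1 m2 r

def psi2 (m1 m2 : ℕ) : ℤ := ⌊(m1 : ℝ) / 2 + (m2 : ℝ) / 3⌋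

def eta2 (n n1 m1 m2 : ℕ) : ℝ :=
  (m1 : ℝ) * n * n1 / 2 + (m2 : ℝ) * n * n1 / 3 - (n : ℝ) * n1 * (psi2 m1 m2 : ℝ)

def zeta2 (n n1 m1 m2 : ℕ) : ℝ := (n : ℝ) * n1 - eta2 n n1 m1 m2

def Q1c (n1 m1 m2 r : ℕ) : ℝ :=
  zeta1 n1 m1 m2 r * (psi1 n1 m1 m2 r : ℝ) ^ 2 + eta1 n1 m1 m2 r * ((psi1 n1 m1 m2 r : ℝ) + 1) ^ 2

def Q1pc (n1 m1 m2 r : ℕ) : ℝ :=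
  zeta1 n1 m1 m2 r * ((psi1 n1 m1 m2 r : ℝ) + 1) ^ 2 + eta1 n1 m1 m2 r * ((psi1 n1 m1 m2 r : ℝ) + 2) ^ 2

def Q2c (n n1 m1 m2 : ℕ) : ℝ :=
  zeta2 n n1 m1 m2 * (psi2 m1 m2 : ℝ) ^ 2 + eta2 n n1 m1 m2 * ((psi2 m1 m2 : ℝ) + 1) ^ 2

/-- Lower bound `LBf3` for `E(f_NOD)` of the column augmented design. -/
def LBf3 (n n1 m1 m2 r : ℕ) (ef0 : ℝ) : ℝ :=
  ((m1 : ℝ) + m2) * ((m1 : ℝ) + m2 - 1) / (((m1 : ℝ) + m2 + r) * ((m1 : ℝ) + m2 + r - 1)) * ef0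
  + 1 / (((m1 : ℝ) + m2 + r) * ((m1 : ℝ) + m2 + r - 1)) * (Q1c n1 m1 m2 r + 2 * Q2c n n1 m1 m2)
  + ((n : ℝ) + n1) * ((m1 : ℝ) + m2 + r) / ((m1 : ℝ) + m2 + r - 1)
  - 1 / (((m1 : ℝ) + m2 + r) * ((m1 : ℝ) + m2 + r - 1)) *
    ((n : ℝ) * ((m1 : ℝ) + m2) ^ 2
      - (n : ℝ) ^ 2 * (((m1 : ℝ) + (m1 : ℝ) ^ 2) / 4 + (2 * (m2 : ℝ) + (m2 : ℝ) ^ 2) / 9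
          + (m1 : ℝ) * m2 / 3)
      - (r : ℝ) * m1 * n * ((n : ℝ) - 2)
      - 2 * (r : ℝ) * m2 * n * ((n : ℝ) - 3) / 3
      - (n : ℝ) * ((n : ℝ) - 1) * (r : ℝ) ^ 2
      + (r : ℝ) * ((n : ℝ) ^ 2 + (n1 : ℝ) ^ 2 / 2)
      + ((m1 : ℝ) / 2 + (m2 : ℝ) / 3 + (m1 : ℝ) * ((m1 : ℝ) - 1) / 4
          + ((m2 : ℝ) + r) * ((m2 : ℝ) + r - 1) / 9 + (m1 : ℝ) * ((m2 : ℝ) + r) / 3)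
        * ((n : ℝ) + n1) ^ 2)

/-- Lower bound `LBf3b` for `E(f_NOD)` of the design with one added blocking column. -/
def LBf3b (n n1 m1 m2 r : ℕ) (ef0 : ℝ) : ℝ :=
  ((m1 : ℝ) + m2) * ((m1 : ℝ) + m2 - 1) / (((m1 : ℝ) + m2 + r + 1) * ((m1 : ℝ) + m2 + r)) * ef0
  + 1 / (((m1 : ℝ) + m2 + r + 1) * ((m1 : ℝ) + m2 + r)) * (Q1pc n1 m1 m2 r + 2 * Q2c n n1 m1 m2)
  + ((n : ℝ) + n1) * ((m1 : ℝ) + m2 + r + 1) / ((m1 : ℝ) + m2 + r)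
  - 1 / (((m1 : ℝ) + m2 + r + 1) * ((m1 : ℝ) + m2 + r)) *
    ((n : ℝ) * ((m1 : ℝ) + m2) ^ 2
      - (n : ℝ) ^ 2 * (((m1 : ℝ) + (m1 : ℝ) ^ 2) / 4 + (2 * (m2 : ℝ) + (m2 : ℝ) ^ 2) / 9
          + (m1 : ℝ) * m2 / 3)
      - ((r : ℝ) + 1) * m1 * n * ((n : ℝ) - 2)
      - 2 * ((r : ℝ) + 1) * m2 * n * ((n : ℝ) - 3) / 3
      - (n : ℝ) * ((n : ℝ) - 1) * ((r : ℝ) + 1) ^ 2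
      + (r : ℝ) * ((n : ℝ) ^ 2 + (n1 : ℝ) ^ 2 / 2) + (n : ℝ) ^ 2 + (n1 : ℝ) ^ 2
      + ((m1 : ℝ) / 2 + (m2 : ℝ) / 3 + (m1 : ℝ) * ((m1 : ℝ) + 1) / 4
          + ((m2 : ℝ) + r) * ((m2 : ℝ) + r - 1) / 9 + ((m1 : ℝ) + 1) * ((m2 : ℝ) + r) / 3)
        * ((n : ℝ) + n1) ^ 2)

/-- Lower bound `LBf3B` for `E(f_NOD)` of the design with two added blocking columns. -/
def LBf3B (n n1 m1 m2 r : ℕ) (ef0 : ℝ) : ℝ :=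
  ((m1 : ℝ) + m2) * ((m1 : ℝ) + m2 - 1) / (((m1 : ℝ) + m2 + r + 2) * ((m1 : ℝ) + m2 + r + 1)) * ef0
  + 1 / (((m1 : ℝ) + m2 + r + 2) * ((m1 : ℝ) + m2 + r + 1)) *
      (Q1pc n1 (m1 + 1) m2 r + 2 * Q2c n n1 (m1 + 1) m2)
  + ((n : ℝ) + n1) * ((m1 : ℝ) + m2 + r + 2) / ((m1 : ℝ) + m2 + r + 1)
  - 1 / (((m1 : ℝ) + m2 + r + 2) * ((m1 : ℝ) + m2 + r + 1)) *
    ((n : ℝ) * ((m1 : ℝ) + m2) ^ 2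
      - (n : ℝ) ^ 2 * (((m1 : ℝ) + (m1 : ℝ) ^ 2) / 4 + (2 * (m2 : ℝ) + (m2 : ℝ) ^ 2) / 9
          + (m1 : ℝ) * m2 / 3)
      - ((r : ℝ) + 2) * m1 * n * ((n : ℝ) - 2)
      - 2 * ((r : ℝ) + 2) * m2 * n * ((n : ℝ) - 3) / 3
      - (n : ℝ) * ((n : ℝ) - 1) * ((r : ℝ) + 2) ^ 2
      + ((r : ℝ) + 2) * (n : ℝ) ^ 2 + (3 + (r : ℝ)) * (n1 : ℝ) ^ 2 / 2 + (n : ℝ) * n1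
      + ((m1 : ℝ) / 2 + (m2 : ℝ) / 3 + ((m1 : ℝ) + 2) * ((m1 : ℝ) + 1) / 4
          + ((m2 : ℝ) + r) * ((m2 : ℝ) + r - 1) / 9 + ((m1 : ℝ) + 2) * ((m2 : ℝ) + r) / 3)
        * ((n : ℝ) + n1) ^ 2)



/-! For a three-level column the wrap-around kernel equals `3/2` on coinciding entries and `23/18`
otherwise (for a two-level column: `3/2` or `5/4`), so `WD(D3b)` is a sum of terms
`(23/18)^(m+r) (27/23)^λ` over pairs of rows, `λ` being their number of coincidences, weighted by
the kernel of the blocking column. The pairs of initial rows reproduce `WD(d0)`; the appended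
entries `0` never coincide with those of `d2 ∈ {1,2}`. Balance of the columns fixes the total
number of coincidences in the remaining blocks, and since no integer lies strictly between `w`
and `w + 1`, convexity of `t ↦ (27/23)^t` bounds each `(27/23)^λ` below by its secant through `w`
and `w + 1`; summing gives the terms `p ρ^w + q ρ^(w+1)` with `ρ = 27/23`. -/

def wdKernel (q x y : ℕ) : ℝ :=
  3 / 2 - |uVal q x - uVal q y| * (1 - |uVal q x - uVal q y|)

lemma WD_eq_sum_prod_wdKernel {N M : ℕ} (q : Fin M → ℕ) (x : Fin N → Fin M → ℕ) :
    WD q x = -(4 / 3 : ℝ) ^ M + 1 / (N : ℝ) ^ 2 *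
      ∑ i, ∑ j, ∏ k, wdKernel (q k) (x i k) (x j k) := rfl

lemma sq_mul_WD_add {N M : ℕ} (q : Fin M → ℕ) (x : Fin N → Fin M → ℕ) :
    (N : ℝ) ^ 2 * (WD q x + (4 / 3) ^ M) = ∑ i, ∑ j, ∏ k, wdKernel (q k) (x i k) (x j k) := by
  rcases Nat.eq_zero_or_pos N with rfl | hN
  · simp
  · rw [WD_eq_sum_prod_wdKernel]
    field_simp
    ring

lemma wdKernel_three {x y : ℕ} (hx : x < 3) (hy : y < 3) :
    wdKernel 3 x y = if x = y then 3 / 2 else 23 / 18 := by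
  interval_cases x <;> interval_cases y <;>
    norm_num [wdKernel, uVal, abs_of_nonneg, abs_of_nonpos]

lemma wdKernel_two {x y : ℕ} (hx : x < 2) (hy : y < 2) :
    wdKernel 2 x y = if x = y then 3 / 2 else 5 / 4 := by
  interval_cases x <;> interval_cases y <;>
    norm_num [wdKernel, uVal, abs_of_nonneg, abs_of_nonpos]

def coincidence {κ : Type*} [Fintype κ] (u v : κ → ℕ) : ℕ := #{k | u k = v k}

section Coincidence

variable {κ : Type*} [Fintype κ]

lemma coincidence_comm (u v : κ → ℕ) : coincidence u v = coincidence v u := by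
  simp only [coincidence, eq_comm]

lemma coincidence_self (u : κ → ℕ) : coincidence u u = Fintype.card κ := by
  simp [coincidence]

lemma coincidence_eq_zero {u v : κ → ℕ} (h : ∀ k, u k ≠ v k) : coincidence u v = 0 := by
  simpa [coincidence] using h

lemma coincidence_append {m r : ℕ} (u v : Fin m → ℕ) (u' v' : Fin r → ℕ) :
    coincidence (Fin.append u u') (Fin.append v v') = coincidence u v + coincidence u' v' := by
  simp only [coincidence, Finset.card_filter, Fin.sum_univ_add, Fin.append_left,
    Fin.append_right]

-- Each coincidence turns a factor `23 / 18` into `3 / 2 = 23 / 18 * (27 / 23)`.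
lemma prod_wdKernel_three {u v : κ → ℕ} (hu : ∀ k, u k < 3) (hv : ∀ k, v k < 3) :
    ∏ k, wdKernel 3 (u k) (v k) =
      (23 / 18 : ℝ) ^ Fintype.card κ * (27 / 23) ^ coincidence u v := by
  rw [Finset.prod_congr rfl fun k _ => wdKernel_three (hu k) (hv k), Finset.prod_ite,
    Finset.prod_const, Finset.prod_const, coincidence, ← Finset.card_univ,
    ← Finset.card_filter_add_card_filter_not (s := Finset.univ) (fun k => u k = v k), pow_add,
    show (3 / 2 : ℝ) = 23 / 18 * (27 / 23) by norm_num, mul_pow]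
  ring

end Coincidence

lemma sq_mul_WD_add_of_three_level {N M : ℕ} {q : Fin M → ℕ} {x : Fin N → Fin M → ℕ}
    (hq : ∀ k, q k = 3) (hx : ∀ i k, x i k < 3) :
    (N : ℝ) ^ 2 * (WD q x + (4 / 3) ^ M) =
      (23 / 18) ^ M * ∑ i, ∑ j, (27 / 23 : ℝ) ^ coincidence (x i) (x j) := by
  simp_rw [sq_mul_WD_add, hq, prod_wdKernel_three (hx _) (hx _), Fintype.card_fin,
    Finset.mul_sum]

lemma WD_eq_of_last_two_level {N M : ℕ} {q : Fin (M + 1) → ℕ} {x : Fin N → Fin (M + 1) → ℕ}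
    (hq : ∀ k : Fin M, q k.castSucc = 3) (hq_last : q (Fin.last M) = 2)
    (hx : ∀ i (k : Fin M), x i k.castSucc < 3) :
    WD q x = -(4 / 3 : ℝ) ^ (M + 1) + 1 / (N : ℝ) ^ 2 * ∑ i, ∑ j,
      wdKernel 2 (x i (Fin.last M)) (x j (Fin.last M)) *
        ((23 / 18) ^ M * (27 / 23) ^ coincidence (Fin.init (x i)) (Fin.init (x j))) := by
  rw [WD_eq_sum_prod_wdKernel]
  refine congrArg _ (congrArg _
    (Finset.sum_congr rfl fun i _ => Finset.sum_congr rfl fun j _ => ?_))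
  have h := prod_wdKernel_three (u := Fin.init (x i)) (v := Fin.init (x j)) (hx i) (hx j)
  simp only [Fintype.card_fin, Fin.init] at h
  simp only [Fin.prod_univ_castSucc, hq, hq_last, h, mul_comm]

lemma one_add_mul_sub_one_le_zpow {a : ℝ} (ha : 0 < a) (d : ℤ) : 1 + d * (a - 1) ≤ a ^ d := by
  obtain ⟨e, rfl | rfl⟩ := Int.eq_nat_or_neg d
  · simpa using one_add_mul_sub_le_pow (by linarith : (-1 : ℝ) ≤ a) e
  · have h := one_add_mul_sub_le_pow (by linarith [inv_pos.2 ha] : (-1 : ℝ) ≤ a⁻¹) e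
    have hinv : 1 - a ≤ a⁻¹ - 1 := by
      rw [← sub_nonneg, show a⁻¹ - 1 - (1 - a) = (a - 1) ^ 2 / a by field_simp; ring]
      positivity
    rw [zpow_neg, zpow_natCast, ← inv_pow]
    push_cast
    nlinarith [(Nat.cast_nonneg e : (0 : ℝ) ≤ e)]

-- Integers lie above the secant of `t ↦ a ^ t` through `w` and `w + 1`.
lemma zpow_add_sub_mul_le_zpow {a : ℝ} (ha : 0 < a) (w x : ℤ) :
    a ^ w + (x - w) * (a ^ (w + 1) - a ^ w) ≤ a ^ x := by
  have h := mul_le_mul_of_nonneg_left (one_add_mul_sub_one_le_zpow ha (x - w))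
    (zpow_pos ha w).le
  rw [← zpow_add₀ ha.ne', add_sub_cancel] at h
  rw [zpow_add_one₀ ha.ne']
  push_cast at h
  linarith

lemma mul_zpow_add_mul_zpow_le_sum_pow {ι : Type*} (s : Finset ι) (x : ι → ℕ) {a : ℝ}
    (ha : 0 < a) (w : ℤ) {p q : ℝ} (hcard : p + q = #s)
    (hsum : p * w + q * (w + 1) = ∑ i ∈ s, (x i : ℝ)) :
    p * a ^ w + q * a ^ (w + 1) ≤ ∑ i ∈ s, a ^ x i := by
  have h := Finset.sum_le_sum fun i (_ : i ∈ s) => zpow_add_sub_mul_le_zpow ha w (x i)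
  simp only [zpow_natCast, Int.cast_natCast, Finset.sum_add_distrib, ← Finset.sum_mul,
    Finset.sum_sub_distrib, Finset.sum_const, nsmul_eq_mul] at h
  linear_combination h + (a ^ (w + 1) - a ^ w) * hsum +
    (a ^ w - w * (a ^ (w + 1) - a ^ w)) * hcard

def IsBalancedOn {α : Type*} [Fintype α] (s : Finset ℕ) (f : α → ℕ) : Prop :=
  (∀ a, f a ∈ s) ∧ ∀ v ∈ s, #s * #{a | f a = v} = Fintype.card α

section Balanced

variable {α β κ : Type*} [Fintype α] [Fintype β] [Fintype κ] {s : Finset ℕ}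

lemma card_mul_sum_sum_ite_eq {f : α → ℕ} {g : β → ℕ} (hf : IsBalancedOn s f)
    (hg : ∀ b, g b ∈ s) :
    #s * ∑ a, ∑ b, (if f a = g b then 1 else 0) = Fintype.card α * Fintype.card β := by
  have hfib : ∑ a, ∑ b, (if f a = g b then 1 else 0) =
      ∑ v ∈ s, #{a | f a = v} * #{b | g b = v} := by
    simp_rw [← Finset.card_filter]
    rw [← Finset.sum_fiberwise_of_maps_to (fun a _ => hf.1 a)]
    refine Finset.sum_congr rfl fun v _ => ?_
    rw [Finset.sum_congr rfl fun a ha => by rw [(Finset.mem_filter.1 ha).2], Finset.sum_const,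
      smul_eq_mul]
    simp_rw [eq_comm (a := v)]
  rw [hfib, Finset.mul_sum]
  calc ∑ v ∈ s, #s * (#{a | f a = v} * #{b | g b = v})
      = ∑ v ∈ s, Fintype.card α * #{b | g b = v} :=
        Finset.sum_congr rfl fun v hv => by rw [← mul_assoc, hf.2 v hv]
    _ = Fintype.card α * Fintype.card β := by
        rw [← Finset.mul_sum, ← Finset.card_eq_sum_card_fiberwise fun b _ => hg b,
          Finset.card_univ]

lemma card_mul_sum_sum_coincidence {d : α → κ → ℕ} {e : β → κ → ℕ}
    (hd : ∀ k, IsBalancedOn s fun a => d a k) (he : ∀ b k, e b k ∈ s) :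
    #s * ∑ a, ∑ b, coincidence (d a) (e b) =
      Fintype.card κ * (Fintype.card α * Fintype.card β) := by
  simp_rw [coincidence, Finset.card_filter]
  rw [Finset.sum_congr rfl fun a _ => Finset.sum_comm, Finset.sum_comm, Finset.mul_sum,
    Finset.sum_congr rfl fun k _ => card_mul_sum_sum_ite_eq (hd k) fun b => he b k,
    Finset.sum_const, Finset.card_univ, smul_eq_mul]

end Balanced

lemma IsUType.isBalancedOn {N m : ℕ} {d : Fin N → Fin (0 + m) → ℕ} (h : IsUType N 0 m d)
    (k : Fin (0 + m)) : IsBalancedOn (range 3) fun i => d i k := by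
  have hk := h k
  rw [if_neg (Nat.not_lt_zero _)] at hk
  simpa [IsBalancedOn] using hk

lemma IsBalanced.isBalancedOn {n1 r : ℕ} {d : Fin n1 → Fin r → ℕ} (h : IsBalanced n1 r d)
    (k : Fin r) : IsBalancedOn {1, 2} fun i => d i k := by
  refine ⟨fun i => by simpa using h.1 i k, fun v hv => ?_⟩
  rcases Finset.mem_insert.1 hv with rfl | hv <;> simp_all [h.2 k]

lemma sum_sum_eq_sum_add_sum_offDiag {ι β : Type*} [DecidableEq ι] [AddCommMonoid β]
    (s : Finset ι) (f : ι → ι → β) :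
    ∑ i ∈ s, ∑ j ∈ s, f i j = ∑ i ∈ s, f i i + ∑ p ∈ s.offDiag, f p.1 p.2 := by
  rw [← Finset.sum_product', ← Finset.diag_union_offDiag,
    Finset.sum_union (Finset.disjoint_diag_offDiag s), Finset.sum_diag]

lemma sum_sum_fin_add {β : Type*} [AddCommMonoid β] {a b : ℕ}
    (f : Fin (a + b) → Fin (a + b) → β) :
    ∑ i, ∑ j, f i j =
      (∑ i : Fin a, ∑ j : Fin a, f (Fin.castAdd b i) (Fin.castAdd b j) +
        ∑ i : Fin a, ∑ j : Fin b, f (Fin.castAdd b i) (Fin.natAdd a j)) +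
      (∑ i : Fin b, ∑ j : Fin a, f (Fin.natAdd a i) (Fin.castAdd b j) +
        ∑ i : Fin b, ∑ j : Fin b, f (Fin.natAdd a i) (Fin.natAdd a j)) := by
  simp only [Fin.sum_univ_add, Finset.sum_add_distrib, add_add_add_comm]

section AugmentedDesign

variable {n n1 m r : ℕ}

lemma augDesign_castAdd (d0 : Fin n → Fin m → ℕ) (d1 : Fin n1 → Fin m → ℕ)
    (d2 : Fin n1 → Fin r → ℕ) (i : Fin n) :
    augDesign n n1 m r d0 d1 d2 (Fin.castAdd n1 i) = Fin.append (d0 i) 0 := by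
  funext k
  refine Fin.addCases (fun k => ?_) (fun k => ?_) k <;> simp [augDesign]

lemma augDesign_natAdd (d0 : Fin n → Fin m → ℕ) (d1 : Fin n1 → Fin m → ℕ)
    (d2 : Fin n1 → Fin r → ℕ) (i : Fin n1) :
    augDesign n n1 m r d0 d1 d2 (Fin.natAdd n i) = Fin.append (d1 i) (d2 i) := by
  funext k
  refine Fin.addCases (fun k => ?_) (fun k => ?_) k <;> simp [augDesign]

lemma augDesign_lt_three {d0 : Fin n → Fin m → ℕ} {d1 : Fin n1 → Fin m → ℕ}
    {d2 : Fin n1 → Fin r → ℕ} (hd0 : ∀ i k, d0 i k < 3) (hd1 : ∀ i k, d1 i k < 3)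
    (hd2 : ∀ i k, d2 i k < 3) (i : Fin (n + n1)) (k : Fin (m + r)) :
    augDesign n n1 m r d0 d1 d2 i k < 3 := by
  refine Fin.addCases (fun i => ?_) (fun i => ?_) i <;>
    refine Fin.addCases (fun k => ?_) (fun k => ?_) k <;>
    simp [augDesign_castAdd, augDesign_natAdd, hd0, hd1, hd2]

lemma init_appendOne {M : ℕ} (D : Fin (n + n1) → Fin M → ℕ) (i : Fin (n + n1)) :
    Fin.init (appendOne n n1 M D i) = D i := by
  funext k
  simp [Fin.init, appendOne]

lemma appendOne_castAdd_last {M : ℕ} (D : Fin (n + n1) → Fin M → ℕ) (i : Fin n) :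
    appendOne n n1 M D (Fin.castAdd n1 i) (Fin.last M) = 0 := by
  simp [appendOne]

lemma appendOne_natAdd_last {M : ℕ} (D : Fin (n + n1) → Fin M → ℕ) (i : Fin n1) :
    appendOne n n1 M D (Fin.natAdd n i) (Fin.last M) = 1 := by
  simp [appendOne]

lemma qfun_eq_three {k : ℕ} (hk : k < 0 + m + r) : qfun 0 m r k = 3 := by
  rw [qfun, if_neg (Nat.not_lt_zero k), if_pos hk]

lemma qfun_self : qfun 0 m r (0 + m + r) = 2 := by
  simp [qfun]

lemma WD_appendOne_augDesign {d0 : Fin n → Fin m → ℕ} {d1 : Fin n1 → Fin m → ℕ}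
    {d2 : Fin n1 → Fin r → ℕ} {q : Fin (m + r + 1) → ℕ}
    (hq : ∀ k : Fin (m + r), q k.castSucc = 3) (hq_last : q (Fin.last _) = 2)
    (hd0 : ∀ i k, d0 i k < 3) (hd1 : ∀ i k, d1 i k < 3) (hd2 : ∀ i k, d2 i k = 1 ∨ d2 i k = 2) :
    WD q (appendOne n n1 (m + r) (augDesign n n1 m r d0 d1 d2)) =
      -(4 / 3 : ℝ) ^ (m + r + 1) + 1 / ((n + n1 : ℕ) : ℝ) ^ 2 * (23 / 18) ^ (m + r) *
        (3 / 2 * (27 / 23) ^ r * ∑ i, ∑ j, (27 / 23 : ℝ) ^ coincidence (d0 i) (d0 j) +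
          2 * (5 / 4) * ∑ i, ∑ j, (27 / 23 : ℝ) ^ coincidence (d0 i) (d1 j) +
          3 / 2 * ∑ i, ∑ j,
            (27 / 23 : ℝ) ^ (coincidence (d1 i) (d1 j) + coincidence (d2 i) (d2 j))) := by
  have hd2_lt (i k) : d2 i k < 3 := by rcases hd2 i k with h | h <;> omega
  have hd2_ne (i k) : d2 i k ≠ 0 := by rcases hd2 i k with h | h <;> omega
  rw [WD_eq_of_last_two_level hq hq_last fun i k => by
    simpa [appendOne] using augDesign_lt_three hd0 hd1 hd2_lt i k]
  simp only [sum_sum_fin_add, init_appendOne, appendOne_castAdd_last, appendOne_natAdd_last,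
    augDesign_castAdd, augDesign_natAdd, coincidence_append]
  have hself : coincidence (0 : Fin r → ℕ) 0 = r := by simp [coincidence_self]
  have hzero (i : Fin n1) : coincidence 0 (d2 i) = 0 :=
    coincidence_eq_zero fun k => (hd2_ne i k).symm
  have hzero' (i : Fin n1) : coincidence (d2 i) 0 = 0 := coincidence_eq_zero (hd2_ne i)
  simp only [hself, hzero, hzero', add_zero, coincidence_comm (d1 _) (d0 _), pow_add _ _ r,
    wdKernel_two (x := 0) (y := 0) (by norm_num) (by norm_num),
    wdKernel_two (x := 0) (y := 1) (by norm_num) (by norm_num),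
    wdKernel_two (x := 1) (y := 0) (by norm_num) (by norm_num),
    wdKernel_two (x := 1) (y := 1) (by norm_num) (by norm_num), if_true, zero_ne_one,
    one_ne_zero, if_false]
  rw [Finset.sum_comm (s := Finset.univ (α := Fin n1))]
  simp only [← Finset.sum_mul, ← Finset.mul_sum]
  ring

variable {d0 : Fin n → Fin (0 + m) → ℕ} {d1 : Fin n1 → Fin (0 + m) → ℕ}
  {d2 : Fin n1 → Fin r → ℕ}

lemma le_sum_pow_coincidence_cross (hd0 : IsUType n 0 m d0) (hd1 : IsUType n1 0 m d1) :
    p3c n n1 m * (27 / 23 : ℝ) ^ w3 m + q3c n n1 m * (27 / 23 : ℝ) ^ (w3 m + 1) ≤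
      ∑ i, ∑ j, (27 / 23 : ℝ) ^ coincidence (d0 i) (d1 j) := by
  have hcount := card_mul_sum_sum_coincidence (d := d0) (e := d1) hd0.isBalancedOn
    fun j k => (hd1.isBalancedOn k).1 j
  simp only [card_range, Fintype.card_fin, zero_add] at hcount
  have hcount' : (3 : ℝ) * ∑ i, ∑ j, (coincidence (d0 i) (d1 j) : ℝ) = m * (n * n1) := by
    exact_mod_cast hcount
  have h := mul_zpow_add_mul_zpow_le_sum_pow (univ : Finset (Fin n × Fin n1))
    (fun p => coincidence (d0 p.1) (d1 p.2)) (by norm_num : (0 : ℝ) < 27 / 23) (w3 m)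
    (p := p3c n n1 m) (q := q3c n n1 m) (by simp [p3c]) (by
      rw [Fintype.sum_prod_type]
      simp only [p3c, q3c]
      push_cast
      linarith)
  rw [Fintype.sum_prod_type] at h
  exact_mod_cast h

lemma le_sum_pow_coincidence_followUp (hd1 : IsUType n1 0 m d1) (hd2 : IsBalanced n1 r d2) :
    n1 * (27 / 23 : ℝ) ^ (m + r) + (p2c n1 m r * (27 / 23 : ℝ) ^ w2 n1 m r +
      q2c n1 m r * (27 / 23 : ℝ) ^ (w2 n1 m r + 1)) ≤
      ∑ i, ∑ j, (27 / 23 : ℝ) ^ (coincidence (d1 i) (d1 j) + coincidence (d2 i) (d2 j)) := by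
  have h1 := card_mul_sum_sum_coincidence (d := d1) (e := d1) hd1.isBalancedOn
    fun j k => (hd1.isBalancedOn k).1 j
  have h2 := card_mul_sum_sum_coincidence (d := d2) (e := d2) hd2.isBalancedOn
    fun j k => (hd2.isBalancedOn k).1 j
  simp only [card_range, Fintype.card_fin, zero_add] at h1
  simp only [Finset.card_pair (by norm_num : (1 : ℕ) ≠ 2), Fintype.card_fin] at h2
  have hsum : ∑ i, ∑ j, ((coincidence (d1 i) (d1 j) + coincidence (d2 i) (d2 j) : ℕ) : ℝ) =
      m * n1 * n1 / 3 + r * n1 * n1 / 2 := by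
    have h1' : (3 : ℝ) * ∑ i, ∑ j, (coincidence (d1 i) (d1 j) : ℝ) = m * (n1 * n1) := by
      exact_mod_cast h1
    have h2' : (2 : ℝ) * ∑ i, ∑ j, (coincidence (d2 i) (d2 j) : ℝ) = r * (n1 * n1) := by
      exact_mod_cast h2
    push_cast
    simp only [Finset.sum_add_distrib]
    linarith
  rw [sum_sum_eq_sum_add_sum_offDiag] at hsum ⊢
  simp only [coincidence_self, Fintype.card_fin, zero_add, Finset.sum_const, Finset.card_univ,
    nsmul_eq_mul] at hsum ⊢
  have h := mul_zpow_add_mul_zpow_le_sum_pow (univ : Finset (Fin n1)).offDiag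
    (fun p => coincidence (d1 p.1) (d1 p.2) + coincidence (d2 p.1) (d2 p.2))
    (by norm_num : (0 : ℝ) < 27 / 23) (w2 n1 m r) (p := p2c n1 m r) (q := q2c n1 m r)
    (by simp [p2c, Finset.offDiag_card, Nat.cast_sub (Nat.le_mul_self n1), mul_sub]) (by
      simp only [p2c, q2c]
      push_cast at hsum ⊢
      linarith)
  exact add_le_add_right h _

end AugmentedDesign

theorem paper_stmt_5_general (n n1 m1 m2 r : ℕ) (hm1 : m1 = 0)
    (d0 : Fin n → Fin (m1 + m2) → ℕ) (d1 : Fin n1 → Fin (m1 + m2) → ℕ)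
    (d2 : Fin n1 → Fin r → ℕ)
    (hd0 : IsUType n m1 m2 d0) (hd1 : IsUType n1 m1 m2 d1) (hd2 : IsBalanced n1 r d2) :
    WD (fun k : Fin (m1 + m2 + r + 1) => qfun m1 m2 r (k : ℕ)) (appendOne n n1 (m1 + m2 + r) (augDesign n n1 (m1 + m2) r d0 d1 d2)) ≥ LBW3b3 n n1 m2 r (WD (fun k : Fin (m1 + m2) => qfun m1 m2 0 (k : ℕ)) d0) := by
  subst hm1
  have hd0_lt (i k) : d0 i k < 3 := mem_range.1 ((hd0.isBalancedOn k).1 i)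
  have hd1_lt (i k) : d1 i k < 3 := mem_range.1 ((hd1.isBalancedOn k).1 i)
  have hWD0 := sq_mul_WD_add_of_three_level
    (fun k : Fin (0 + m2) => qfun_eq_three (r := 0) k.isLt) hd0_lt
  have hcross := le_sum_pow_coincidence_cross hd0 hd1
  have hfollow := le_sum_pow_coincidence_followUp hd1 hd2
  have hpow (k : ℕ) : (3 / 2 : ℝ) ^ k = (23 / 18) ^ k * (27 / 23) ^ k := by
    rw [← mul_pow]; norm_num
  rw [ge_iff_le, WD_appendOne_augDesign (fun k => qfun_eq_three k.isLt) qfun_self hd0_lt hd1_lt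
    hd2.1, LBW3b3, Cconst]
  simp only [zero_add] at *
  push_cast
  set c := 1 / ((n : ℝ) + n1) ^ 2
  linear_combination c * (3 / 2) ^ (r + 1) * hWD0 + c * (23 / 18) ^ (m2 + r) * (5 / 2) * hcross
    + c * (23 / 18) ^ (m2 + r) * (3 / 2) * hfollow + c * (3 / 2) * n1 * hpow (m2 + r)
    + c * (3 / 2) * (23 / 18) ^ m2 * (∑ i, ∑ j, (27 / 23 : ℝ) ^ coincidence (d0 i) (d0 j)) * hpow r

theorem paper_stmt_5 (n n1 m1 m2 r : ℕ) (hn : 1 ≤ n) (hn1 : 2 ≤ n1)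
    (hm : 1 ≤ m2) (hm1 : m1 = 0)
    (d0 : Fin n → Fin (m1 + m2) → ℕ) (d1 : Fin n1 → Fin (m1 + m2) → ℕ)
    (d2 : Fin n1 → Fin r → ℕ)
    (hd0 : IsUType n m1 m2 d0) (hd1 : IsUType n1 m1 m2 d1) (hd2 : IsBalanced n1 r d2) :
    WD (fun k : Fin (m1 + m2 + r + 1) => qfun m1 m2 r (k : ℕ)) (appendOne n n1 (m1 + m2 + r) (augDesign n n1 (m1 + m2) r d0 d1 d2)) ≥ LBW3b3 n n1 m2 r (WD (fun k : Fin (m1 + m2) => qfun m1 m2 0 (k : ℕ)) d0) :=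
  paper_stmt_5_general n n1 m1 m2 r hm1 d0 d1 d2 hd0 hd1 hd2

end CAUD

end
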